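/- Let A be a unital alternative *-algebra over ℂ containing a nontrivial symmetric idempotent e satisfying conditions (♠) and (♣), and let Φ : A → A be a map satisfying the *-Jordan n-derivation identity in the last two slots. Then Φ(e₁)* = Φ(e₁) and Φ(e₂)* = Φ(e₂), where e₁ = e and e₂ = 1 − e. -/

import Mathlib

/-- The Jordan `•`-product `a • b = ab + b a*`. -/
def starJordan {A : Type*} [NonAssocRing A] [StarRing A] (a b : A) : A :=
  a * b + b * star a

/-- Left-normed iterated Jordan `•`-product of a list (empty list ↦ 0, junk value). -/
def leftStarJordan {A : Type*} [NonAssocRing A] [StarRing A] : List A → A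
  | [] => 0
  | x :: xs => xs.foldl starJordan x

/-- The family `a₁ = ⋯ = a_{n-2} = 1`, `a_{n-1} = x`, `a_n = y`. -/
def lastTwoFamily {A : Type*} [One A] (n : ℕ) (x y : A) : Fin n → A :=
  fun i => if (i : ℕ) = n - 2 then x else if (i : ℕ) = n - 1 then y else 1

/-- `e₁ = e`, `e₂ = 1 - e`. -/
def peirceIdem {A : Type*} [NonAssocRing A] (e : A) : Fin 2 → A :=
  fun i => if i = 0 then e else 1 - e

/-- Membership in the Peirce component `A_{ij}`: `eᵢ x = x` and `x eⱼ = x`. -/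
def inPeirce {A : Type*} [NonAssocRing A] (e : A) (i j : Fin 2) (x : A) : Prop :=
  peirceIdem e i * x = x ∧ x * peirceIdem e j = x

/-- The inner derivation `Ξ_{y,z}(a) = y(za) − z(ya) + y(az) − (ya)z + (az)y − (ay)z`. -/
def innerDer {A : Type*} [NonAssocRing A] (y z a : A) : A :=
  y * (z * a) - z * (y * a) + y * (a * z) - (y * a) * z + (a * z) * y - (a * y) * z

/-!
Substituting `a₁ = ⋯ = a_{n-2} = 1` collapses the `n`-slot identity to
`Φ(M(x • y)) = (c • x) • y + M(Φ(x) • y + x • Φ(y))` with `M = 2^(n-2)`, where `c` collects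
the terms with `Φ(1)` in one of the first `n - 2` slots. Write `f = 1 - e`, `S = Φ(e) - Φ(e)*`,
`x₀ = e / M`, `Z = c • x₀ + M Φ(x₀)`, and let `A = ⊕ Aᵢⱼ` be the Peirce decomposition of the
alternative algebra with respect to `e`.

Since `f • e = 0 = f • x₀`, the pairs `(f, e)` and `(f, x₀)` show that `f K + K f = 0`, hence
`K ∈ A₁₁`, for `K = S` and for `K = Φ(x₀) - Φ(x₀)*`, and that `Z` has no `A₂₂`-component. As
`e • x₀ = x₀ • e`, comparing the pairs `(e, x₀)` and `(x₀, e)` then gives `Z - Z* = S`.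
For `b ∈ A₁₂` we have `e • b = b`, and the pair `(x₀, b)` reads `Φ(b) = Z • b + e • Φ(b)`; its
`A₁₂`-component says `(e Z e) b = 0`. Hence `(e Z e) r (1 - e) = 0` for every `r`, so `e Z e = 0`
by (♣), and `S = e S e = e Z e - (e Z e)* = 0`. For `1 - e` the roles of (♠) and (♣) are
exchanged.
-/

section StarJordan

variable {A : Type*} [NonAssocRing A] [StarRing A]

theorem starJordan_add_left (x x' y : A) :
    starJordan (x + x') y = starJordan x y + starJordan x' y := by
  simp only [starJordan, star_add, add_mul, mul_add]
  abel

theorem starJordan_nsmul_left (n : ℕ) (x y : A) :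
    starJordan (n • x) y = n • starJordan x y := by
  simp only [starJordan, star_nsmul, smul_mul_assoc, mul_smul_comm, smul_add]

theorem starJordan_nsmul_right (n : ℕ) (x y : A) :
    starJordan x (n • y) = n • starJordan x y := by
  simp only [starJordan, smul_mul_assoc, mul_smul_comm, smul_add]

theorem starJordan_sum_left {ι : Type*} (s : Finset ι) (w : ι → A) (y : A) :
    starJordan (∑ i ∈ s, w i) y = ∑ i ∈ s, starJordan (w i) y :=
  map_sum (AddMonoidHom.mk' (starJordan · y) fun x x' => starJordan_add_left x x' y) w s

theorem IsSelfAdjoint.starJordan_left {y : A} (hy : IsSelfAdjoint y) (x : A) :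
    IsSelfAdjoint (starJordan x y) := by
  simp only [IsSelfAdjoint, starJordan, star_add, star_mul, star_star, hy.star_eq, add_comm]

theorem IsSelfAdjoint.starJordan_sub_star {x : A} (hx : IsSelfAdjoint x) (w : A) :
    starJordan x w - star (starJordan x w) = x * (w - star w) + (w - star w) * x := by
  simp only [starJordan, star_add, star_mul, hx.star_eq, mul_sub, sub_mul]
  abel

theorem leftStarJordan_append_pair {l : List A} (hl : l ≠ []) (u v : A) :
    leftStarJordan (l ++ [u, v]) = starJordan (starJordan (leftStarJordan l) u) v := by
  obtain ⟨a, l, rfl⟩ := List.exists_cons_of_ne_nil hl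
  simp [leftStarJordan, List.foldl_append]

theorem foldl_starJordan_nsmul_one (p m : ℕ) (u v : A) :
    (List.replicate p 1 ++ [u, v]).foldl starJordan (m • (1 : A)) =
      (2 ^ (p + 1) * m) • starJordan u v := by
  induction p generalizing m with
  | zero =>
    have : starJordan (m • (1 : A)) u = (2 * m) • u := by
      simp only [starJordan, star_nsmul, star_one, smul_mul_assoc, mul_smul_comm, one_mul,
        mul_one, two_mul, add_nsmul]
    rw [List.replicate_zero, List.nil_append, List.foldl_cons, List.foldl_cons, List.foldl_nil,
      this, starJordan_nsmul_left, zero_add, pow_one]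
  | succ p ih =>
    have : starJordan (m • (1 : A)) 1 = (2 * m) • 1 := by
      simp only [starJordan, star_nsmul, star_one, smul_mul_assoc, one_mul, two_mul, add_nsmul]
    rw [List.replicate_succ, List.cons_append, List.foldl_cons, this, ih]
    ring_nf

theorem leftStarJordan_replicate_one_append_pair (p : ℕ) (u v : A) :
    leftStarJordan (List.replicate p 1 ++ [u, v]) = 2 ^ p • starJordan u v := by
  cases p with
  | zero => simp [leftStarJordan]
  | succ p =>
    rw [List.replicate_succ, List.cons_append, leftStarJordan]
    simpa only [one_nsmul, mul_one] using foldl_starJordan_nsmul_one p 1 u v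

theorem starJordan_one_sub_self {e : A} (he : IsIdempotentElem e) (hes : IsSelfAdjoint e) :
    starJordan (1 - e) e = 0 := by
  rw [starJordan, ((IsSelfAdjoint.one A).sub hes).star_eq, he.one_sub_mul_self,
    he.mul_one_sub_self, add_zero]

theorem starJordan_one_sub_of_nsmul_eq [IsAddTorsionFree A] {e x₀ : A} {M : ℕ} (hM : M ≠ 0)
    (he : IsIdempotentElem e) (hes : IsSelfAdjoint e) (hx₀ : M • x₀ = e) :
    starJordan (1 - e) x₀ = 0 := by
  have h : M • starJordan (1 - e) x₀ = 0 := by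
    rw [← starJordan_nsmul_right, hx₀, starJordan_one_sub_self he hes]
  exact (smul_eq_zero.mp h).resolve_left hM

end StarJordan

section LastTwoFamily

variable {A : Type*}

theorem List.ofFn_add_two {p : ℕ} (g : Fin (p + 2) → A) :
    List.ofFn g = List.ofFn (fun i : Fin p => g (Fin.castAdd 2 i)) ++
      [g (Fin.natAdd p 0), g (Fin.natAdd p 1)] := by
  rw [List.ofFn_add]
  rfl

variable [One A] (p : ℕ) (x y : A)

theorem lastTwoFamily_castAdd (i : Fin p) : lastTwoFamily (p + 2) x y (Fin.castAdd 2 i) = 1 := by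
  simp [lastTwoFamily, i.isLt.ne, (i.isLt.trans (Nat.lt_succ_self p)).ne]

theorem lastTwoFamily_natAdd_zero : lastTwoFamily (p + 2) x y (Fin.natAdd p 0) = x := by
  simp [lastTwoFamily]

theorem lastTwoFamily_natAdd_one : lastTwoFamily (p + 2) x y (Fin.natAdd p 1) = y := by
  simp [lastTwoFamily]

theorem update_lastTwoFamily_natAdd_zero (v : A) :
    Function.update (lastTwoFamily (p + 2) x y) (Fin.natAdd p 0) v = lastTwoFamily (p + 2) v y := by
  ext k
  rw [Function.update_apply]
  split_ifs with h <;> simp_all [lastTwoFamily, Fin.ext_iff]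

theorem update_lastTwoFamily_natAdd_one (v : A) :
    Function.update (lastTwoFamily (p + 2) x y) (Fin.natAdd p 1) v = lastTwoFamily (p + 2) x v := by
  ext k
  rw [Function.update_apply]
  split_ifs with h <;> simp_all [lastTwoFamily, Fin.ext_iff]

end LastTwoFamily

section ScaledRule

variable {A : Type*} [NonAssocRing A] [StarRing A]

def IsScaledStarJordanDerivation (Φ : A → A) (M : ℕ) (c : A) : Prop :=
  ∀ x y : A, Φ (M • starJordan x y) =
    starJordan (starJordan c x) y + M • starJordan (Φ x) y + M • starJordan x (Φ y)

theorem leftStarJordan_ofFn_lastTwoFamily (p : ℕ) (u v : A) :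
    leftStarJordan (List.ofFn (lastTwoFamily (p + 2) u v)) = 2 ^ p • starJordan u v := by
  rw [List.ofFn_add_two, lastTwoFamily_natAdd_zero, lastTwoFamily_natAdd_one]
  simp only [lastTwoFamily_castAdd, List.ofFn_const]
  exact leftStarJordan_replicate_one_append_pair p u v

theorem leftStarJordan_ofFn_update_lastTwoFamily_castAdd {p : ℕ} (i : Fin p) (x y v : A) :
    leftStarJordan
        (List.ofFn (Function.update (lastTwoFamily (p + 2) x y) (Fin.castAdd 2 i) v)) =
      starJordan (starJordan
        (leftStarJordan (List.ofFn (Function.update (fun _ : Fin p => (1 : A)) i v))) x) y := by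
  have hprefix : (fun j : Fin p =>
      Function.update (lastTwoFamily (p + 2) x y) (Fin.castAdd 2 i) v (Fin.castAdd 2 j)) =
        Function.update (fun _ => 1) i v := by
    rw [← Function.comp_def, Function.update_comp_eq_of_injective _ (Fin.castAdd_injective p 2)]
    congr 1
    exact funext (lastTwoFamily_castAdd p x y)
  have hne : ∀ k : Fin 2, Fin.natAdd p k ≠ Fin.castAdd 2 i := fun k h => by
    have := congrArg Fin.val h
    simp only [Fin.val_natAdd, Fin.val_castAdd] at this
    omega
  rw [List.ofFn_add_two, hprefix, Function.update_of_ne (hne 0), Function.update_of_ne (hne 1),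
    lastTwoFamily_natAdd_zero, lastTwoFamily_natAdd_one,
    leftStarJordan_append_pair (by simpa using i.pos.ne')]

theorem isScaledStarJordanDerivation_of_lastTwo {p : ℕ} {Φ : A → A}
    (hΦ : ∀ x y : A,
      Φ (leftStarJordan (List.ofFn (lastTwoFamily (p + 2) x y))) =
        ∑ k : Fin (p + 2), leftStarJordan (List.ofFn
          (Function.update (lastTwoFamily (p + 2) x y) k (Φ (lastTwoFamily (p + 2) x y k))))) :
    IsScaledStarJordanDerivation Φ (2 ^ p)
      (∑ i : Fin p, leftStarJordan (List.ofFn (Function.update (fun _ => (1 : A)) i (Φ 1)))) := by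
  intro x y
  have h := hΦ x y
  simp only [Fin.sum_univ_add, Fin.sum_univ_two, lastTwoFamily_castAdd,
    leftStarJordan_ofFn_update_lastTwoFamily_castAdd, lastTwoFamily_natAdd_zero,
    lastTwoFamily_natAdd_one, update_lastTwoFamily_natAdd_zero, update_lastTwoFamily_natAdd_one,
    leftStarJordan_ofFn_lastTwoFamily] at h
  rw [h, starJordan_sum_left, starJordan_sum_left, add_assoc]

namespace IsScaledStarJordanDerivation

variable {Φ : A → A} {M : ℕ} {c : A}

theorem map_zero (hΦ : IsScaledStarJordanDerivation Φ M c) : Φ 0 = 0 := by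
  simpa [starJordan] using hΦ 0 0

theorem sub_star_map (hΦ : IsScaledStarJordanDerivation Φ M c) {x y : A} (hx : IsSelfAdjoint x)
    (hy : IsSelfAdjoint y) :
    Φ (M • starJordan x y) - star (Φ (M • starJordan x y)) =
      M • (x * (Φ y - star (Φ y)) + (Φ y - star (Φ y)) * x) := by
  rw [hΦ x y, ← hx.starJordan_sub_star, smul_sub]
  simp only [star_add, star_nsmul, (hy.starJordan_left _).star_eq]
  abel

end IsScaledStarJordanDerivation

end ScaledRule

class IsAlternative (A : Type*) [Mul A] : Prop where
  mul_self_mul (a b : A) : a * a * b = a * (a * b)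
  mul_mul_self (a b : A) : b * a * a = b * (a * a)

namespace IsAlternative

variable {A : Type*} [NonAssocRing A] [IsAlternative A]

theorem polarize_left (a c b : A) : (a * c + c * a) * b = a * (c * b) + c * (a * b) := by
  have h := mul_self_mul (a + c) b
  simp only [add_mul, mul_add, mul_self_mul a b, mul_self_mul c b] at h ⊢
  linear_combination (norm := abel) h

theorem polarize_right (b a c : A) : b * (a * c + c * a) = b * a * c + b * c * a := by
  have h := mul_mul_self (a + c) b
  simp only [add_mul, mul_add, mul_mul_self a b, mul_mul_self c b] at h ⊢
  linear_combination (norm := abel) -h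

theorem flexible (x y : A) : x * (y * x) = x * y * x := by
  have h := polarize_right x x y
  rw [mul_add, ← mul_self_mul x y] at h
  linear_combination (norm := abel) h

end IsAlternative

open IsAlternative

section Peirce

variable {A : Type*} [NonAssocRing A] {e : A}

/-- The Peirce spaces of `e` are `A₁₁ = IsPeirce e 1 1`, `A₁₂ = IsPeirce e 1 0`,
`A₂₁ = IsPeirce e 0 1` and `A₂₂ = IsPeirce e 0 0`. Integer eigenvalues let `IsPeirce.mul` state all
Peirce multiplication rules at once: a product whose eigenvalue leaves `{0, 1}` vanishes by
`IsPeirce.eq_zero_of_left` / `IsPeirce.eq_zero_of_right`. -/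
def IsPeirce (e : A) (a b : ℤ) (x : A) : Prop :=
  e * x = a • x ∧ x * e = b • x

variable [IsAlternative A]

theorem IsIdempotentElem.mul_mul_self_left (he : IsIdempotentElem e) (z : A) :
    e * (e * z) = e * z := by
  rw [← IsAlternative.mul_self_mul e z, he.eq]

theorem IsIdempotentElem.mul_mul_self_right (he : IsIdempotentElem e) (z : A) :
    z * e * e = z * e := by
  rw [IsAlternative.mul_mul_self e z, he.eq]

variable {a b c d : ℤ} {x y : A}

theorem IsPeirce.mul (hx : IsPeirce e a b x) (hy : IsPeirce e c d y) :
    IsPeirce e (a + b - c) (c + d - b) (x * y) := by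
  constructor
  · have h := polarize_left e x y
    rw [hx.1, hx.2, hy.1, ← add_smul, smul_mul_assoc, mul_smul_comm] at h
    rw [sub_smul, h, add_sub_cancel_right]
  · have h := polarize_right x y e
    rw [hy.1, hy.2, hx.2, ← add_smul, smul_mul_assoc, mul_smul_comm, add_comm d] at h
    rw [sub_smul, h, add_sub_cancel_right]

variable [IsAddTorsionFree A]

theorem IsPeirce.eq_zero_of_left (he : IsIdempotentElem e) (hx : IsPeirce e a b x)
    (ha₀ : a ≠ 0) (ha₁ : a ≠ 1) : x = 0 := by
  have h := he.mul_mul_self_left x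
  rw [hx.1, mul_smul_comm, hx.1, smul_smul, ← sub_eq_zero, ← sub_smul] at h
  refine (smul_eq_zero.mp h).resolve_left ?_
  rw [← mul_sub_one]
  exact mul_ne_zero ha₀ (sub_ne_zero.mpr ha₁)

theorem IsPeirce.eq_zero_of_right (he : IsIdempotentElem e) (hx : IsPeirce e a b x)
    (hb₀ : b ≠ 0) (hb₁ : b ≠ 1) : x = 0 := by
  have h := he.mul_mul_self_right x
  rw [hx.2, smul_mul_assoc, hx.2, smul_smul, ← sub_eq_zero, ← sub_smul] at h
  refine (smul_eq_zero.mp h).resolve_left ?_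
  rw [← mul_sub_one]
  exact mul_ne_zero hb₀ (sub_ne_zero.mpr hb₁)

end Peirce

section PeirceProjections

variable {A : Type*} [NonAssocRing A] {e : A}

def peirce11 (e : A) : A →+ A := (AddMonoidHom.mulRight e).comp (AddMonoidHom.mulLeft e)

def peirce12 (e : A) : A →+ A := AddMonoidHom.mulLeft e - peirce11 e

def peirce21 (e : A) : A →+ A := AddMonoidHom.mulRight e - peirce11 e

def peirce22 (e : A) : A →+ A :=
  AddMonoidHom.id A - AddMonoidHom.mulLeft e - AddMonoidHom.mulRight e + peirce11 e

@[simp] theorem peirce11_apply (z : A) : peirce11 e z = e * z * e := rfl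

@[simp] theorem peirce12_apply (z : A) : peirce12 e z = e * z - e * z * e := rfl

@[simp] theorem peirce21_apply (z : A) : peirce21 e z = z * e - e * z * e := rfl

@[simp] theorem peirce22_apply (z : A) : peirce22 e z = z - e * z - z * e + e * z * e := rfl

theorem peirce_decomposition (z : A) :
    peirce11 e z + peirce12 e z + peirce21 e z + peirce22 e z = z := by
  simp only [peirce11_apply, peirce12_apply, peirce21_apply, peirce22_apply]
  abel

theorem peirce22_eq_zero_of_mul_left {w : A} (h : e * w = w) : peirce22 e w = 0 := by
  rw [peirce22_apply, h]
  abel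

theorem IsPeirce.peirce11_eq {a b : ℤ} {x : A} (hx : IsPeirce e a b x) :
    peirce11 e x = (a * b) • x := by
  rw [peirce11_apply, hx.1, smul_mul_assoc, hx.2, smul_smul]

theorem IsPeirce.peirce12_eq {a b : ℤ} {x : A} (hx : IsPeirce e a b x) :
    peirce12 e x = (a - a * b) • x := by
  rw [peirce12_apply, ← peirce11_apply, hx.peirce11_eq, hx.1, sub_smul]

theorem IsPeirce.star [StarRing A] (hes : IsSelfAdjoint e) {a b : ℤ} {x : A}
    (hx : IsPeirce e a b x) : IsPeirce e b a (star x) := by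
  constructor
  · rw [← hes.star_eq, ← star_mul, hx.2, star_zsmul]
  · rw [← hes.star_eq, ← star_mul, hx.1, star_zsmul]

variable [IsAlternative A]

theorem peirce11_star [StarRing A] (hes : IsSelfAdjoint e) (z : A) :
    star (peirce11 e z) = peirce11 e (star z) := by
  rw [peirce11_apply, peirce11_apply, star_mul, star_mul, hes.star_eq, flexible]

theorem isPeirce_peirce11 (he : IsIdempotentElem e) (z : A) : IsPeirce e 1 1 (peirce11 e z) := by
  simp only [IsPeirce, one_smul, peirce11_apply, flexible, he.mul_mul_self_left,
    he.mul_mul_self_right, and_self]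

theorem isPeirce_peirce12 (he : IsIdempotentElem e) (z : A) : IsPeirce e 1 0 (peirce12 e z) := by
  simp only [IsPeirce, one_smul, zero_smul, peirce12_apply, mul_sub, sub_mul, flexible,
    he.mul_mul_self_left, he.mul_mul_self_right, sub_self, and_self]

theorem isPeirce_peirce21 (he : IsIdempotentElem e) (z : A) : IsPeirce e 0 1 (peirce21 e z) := by
  simp only [IsPeirce, one_smul, zero_smul, peirce21_apply, mul_sub, sub_mul, flexible,
    he.mul_mul_self_left, he.mul_mul_self_right, sub_self, and_self]

theorem isPeirce_peirce22 (he : IsIdempotentElem e) (z : A) : IsPeirce e 0 0 (peirce22 e z) := by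
  simp only [IsPeirce, zero_smul, peirce22_apply, mul_add, mul_sub, add_mul, sub_mul, flexible,
    he.mul_mul_self_left, he.mul_mul_self_right]
  constructor <;> abel

theorem peirce22_eq_zero_of_mul_right {w : A} (h : w * e = w) : peirce22 e w = 0 := by
  rw [peirce22_apply, h, ← flexible, h]
  abel

theorem peirce22_one_sub_mul (he : IsIdempotentElem e) (w : A) :
    peirce22 e ((1 - e) * w) = peirce22 e w := by
  rw [sub_mul, one_mul, map_sub, peirce22_eq_zero_of_mul_left (he.mul_mul_self_left w), sub_zero]

theorem peirce22_mul_one_sub (he : IsIdempotentElem e) (w : A) :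
    peirce22 e (w * (1 - e)) = peirce22 e w := by
  rw [mul_sub, mul_one, map_sub, peirce22_eq_zero_of_mul_right (he.mul_mul_self_right w),
    sub_zero]

theorem peirce22_starJordan_right [StarRing A] (he : IsIdempotentElem e) (z : A) :
    peirce22 e (starJordan z e) = 0 := by
  rw [starJordan, map_add, peirce22_eq_zero_of_mul_right (he.mul_mul_self_right z),
    peirce22_eq_zero_of_mul_left (he.mul_mul_self_left _), add_zero]

end PeirceProjections

section PeirceRules

variable {A : Type*} [NonAssocRing A] {e : A}

theorem IsPeirce.of_one_sub {a b : ℤ} {x : A} (hx : IsPeirce (1 - e) a b x) :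
    IsPeirce e (1 - a) (1 - b) x := by
  obtain ⟨h₁, h₂⟩ := hx
  rw [sub_mul, one_mul] at h₁
  rw [mul_sub, mul_one] at h₂
  constructor
  · rw [sub_smul, one_smul, ← h₁, sub_sub_cancel]
  · rw [sub_smul, one_smul, ← h₂, sub_sub_cancel]

variable [IsAlternative A]

theorem IsPeirce.peirce12_mul {a b c d : ℤ} {x y : A} (hx : IsPeirce e a b x)
    (hy : IsPeirce e c d y) :
    peirce12 e (x * y) = ((a + b - c) - (a + b - c) * (c + d - b)) • (x * y) :=
  (hx.mul hy).peirce12_eq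

theorem peirce12_starJordan [StarRing A] (he : IsIdempotentElem e) (hes : IsSelfAdjoint e)
    {b : A} (hb : IsPeirce e 1 0 b) (Z : A) :
    peirce12 e (starJordan Z b) = peirce11 e Z * b + b * star (peirce22 e Z) := by
  have h₁₁ := isPeirce_peirce11 he Z
  have h₁₂ := isPeirce_peirce12 he Z
  have h₂₁ := isPeirce_peirce21 he Z
  have h₂₂ := isPeirce_peirce22 he Z
  conv_lhs => rw [← peirce_decomposition (e := e) Z]
  simp only [starJordan, star_add, add_mul, mul_add, map_add, h₁₁.peirce12_mul hb,
    h₁₂.peirce12_mul hb, h₂₁.peirce12_mul hb, h₂₂.peirce12_mul hb,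
    hb.peirce12_mul (h₁₁.star hes), hb.peirce12_mul (h₁₂.star hes),
    hb.peirce12_mul (h₂₁.star hes), hb.peirce12_mul (h₂₂.star hes)]
  norm_num

theorem peirce12_starJordan_self_left [StarRing A] (he : IsIdempotentElem e)
    (hes : IsSelfAdjoint e) (w : A) : peirce12 e (starJordan e w) = peirce12 e w := by
  simp only [starJordan, hes.star_eq, map_add, peirce12_apply, he.mul_mul_self_left, ← flexible,
    he.mul_mul_self_right, sub_self, add_zero]

theorem peirce22_starJordan_one_sub_left [StarRing A] (he : IsIdempotentElem e)
    (hes : IsSelfAdjoint e) (w : A) : peirce22 e (starJordan (1 - e) w) = 2 • peirce22 e w := by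
  rw [starJordan, ((IsSelfAdjoint.one A).sub hes).star_eq, map_add, peirce22_one_sub_mul he,
    peirce22_mul_one_sub he, two_nsmul]

variable [IsAddTorsionFree A]

theorem IsIdempotentElem.isPeirce_zero_zero_of_anticommute {u K : A} (hu : IsIdempotentElem u)
    (h : u * K + K * u = 0) : IsPeirce u 0 0 K := by
  have hKu : K * u = -(u * K) := eq_neg_of_add_eq_zero_right h
  have hw : IsPeirce u 1 (-1) (u * K) := by
    refine ⟨by rw [one_smul, hu.mul_mul_self_left], ?_⟩
    rw [← flexible, hKu, mul_neg, hu.mul_mul_self_left, neg_one_smul]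
  have huK : u * K = 0 := hw.eq_zero_of_right hu (by norm_num) (by norm_num)
  rw [huK, neg_zero] at hKu
  exact ⟨by rw [huK, zero_smul], by rw [hKu, zero_smul]⟩

theorem IsPeirce.mul_mul_one_sub (he : IsIdempotentElem e) {N : A} (hN : IsPeirce e 1 1 N)
    (r : A) : N * r * (1 - e) = N * peirce12 e r := by
  have h₁₁ := hN.mul (isPeirce_peirce11 he r)
  have h₁₂ := hN.mul (isPeirce_peirce12 he r)
  have h₂₁ := hN.mul (isPeirce_peirce21 he r)
  have h₂₂ := hN.mul (isPeirce_peirce22 he r)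
  norm_num only at h₁₁ h₁₂ h₂₁ h₂₂
  conv_lhs => rw [← peirce_decomposition (e := e) r]
  rw [mul_add, mul_add, mul_add, h₂₁.eq_zero_of_left he (by norm_num) (by norm_num),
    h₂₂.eq_zero_of_left he (by norm_num) (by norm_num), add_zero, add_zero, mul_sub, mul_one,
    add_mul, h₁₁.2, h₁₂.2, one_smul, zero_smul, add_zero, add_sub_cancel_left]

theorem peirce22_starJordan_of_nsmul_eq [StarRing A] {M : ℕ} {x₀ : A} (hM : M ≠ 0)
    (he : IsIdempotentElem e) (hx₀ : M • x₀ = e) (z : A) : peirce22 e (starJordan z x₀) = 0 := by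
  have h : M • peirce22 e (starJordan z x₀) = 0 := by
    rw [← map_nsmul, ← starJordan_nsmul_right, hx₀, peirce22_starJordan_right he]
  exact (smul_eq_zero.mp h).resolve_left hM

end PeirceRules

section SelfAdjointness

variable {A : Type*} [NonAssocRing A] [StarRing A] [IsAlternative A] {e : A}

namespace IsScaledStarJordanDerivation

variable {Φ : A → A} {M : ℕ} {c : A} {x₀ : A}

theorem peirce12_starJordan_eq_zero (hΦ : IsScaledStarJordanDerivation Φ M c)
    (he : IsIdempotentElem e) (hes : IsSelfAdjoint e) (hx₀ : M • x₀ = e) {b : A}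
    (hb : IsPeirce e 1 0 b) : peirce12 e (starJordan (starJordan c x₀ + M • Φ x₀) b) = 0 := by
  have heb : M • starJordan x₀ b = b := by
    rw [← starJordan_nsmul_left, hx₀, starJordan, hes.star_eq, hb.1, hb.2, one_smul, zero_smul,
      add_zero]
  have h := congrArg (peirce12 e) (hΦ x₀ b)
  rw [heb, ← starJordan_nsmul_left, ← starJordan_nsmul_left, hx₀,
    ← starJordan_add_left, map_add, peirce12_starJordan_self_left he hes] at h
  exact add_eq_right.mp h.symm

variable [IsAddTorsionFree A]

theorem isPeirce_sub_star_map (hΦ : IsScaledStarJordanDerivation Φ M c) (hM : M ≠ 0)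
    (he : IsIdempotentElem e) (hes : IsSelfAdjoint e) {s : A} (hs : IsSelfAdjoint s)
    (hfs : starJordan (1 - e) s = 0) : IsPeirce e 1 1 (Φ s - star (Φ s)) := by
  have h := hΦ.sub_star_map ((IsSelfAdjoint.one A).sub hes) hs
  rw [hfs, smul_zero, hΦ.map_zero, star_zero, sub_zero, eq_comm, smul_eq_zero] at h
  simpa using (he.one_sub.isPeirce_zero_zero_of_anticommute (h.resolve_left hM)).of_one_sub

theorem peirce22_map_of_nsmul_eq (hΦ : IsScaledStarJordanDerivation Φ M c) (hM : M ≠ 0)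
    (he : IsIdempotentElem e) (hes : IsSelfAdjoint e) (hx₀ : M • x₀ = e) :
    peirce22 e (Φ x₀) = 0 := by
  have h := congrArg (peirce22 e) (hΦ (1 - e) x₀)
  rw [starJordan_one_sub_of_nsmul_eq hM he hes hx₀, smul_zero, hΦ.map_zero, map_add, map_add,
    map_nsmul, map_nsmul, peirce22_starJordan_of_nsmul_eq hM he hx₀,
    peirce22_starJordan_of_nsmul_eq hM he hx₀, peirce22_starJordan_one_sub_left he hes, smul_smul,
    (peirce22 e).map_zero, zero_add, smul_zero, zero_add, eq_comm, smul_eq_zero] at h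
  exact h.resolve_left (mul_ne_zero hM two_ne_zero)

theorem nsmul_sub_star_map_of_nsmul_eq (hΦ : IsScaledStarJordanDerivation Φ M c) (hM : M ≠ 0)
    (he : IsIdempotentElem e) (hes : IsSelfAdjoint e) (hx₀s : IsSelfAdjoint x₀)
    (hx₀ : M • x₀ = e) : M • (Φ x₀ - star (Φ x₀)) = Φ e - star (Φ e) := by
  have hex₀ : starJordan e x₀ = starJordan x₀ e := nsmul_right_injective hM <| by
    dsimp only
    rw [← starJordan_nsmul_right, ← starJordan_nsmul_left, hx₀]
  have h := hΦ.sub_star_map hes hx₀s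
  rw [hex₀, hΦ.sub_star_map hx₀s hes, smul_add, ← smul_mul_assoc, ← mul_smul_comm, hx₀] at h
  have hS := hΦ.isPeirce_sub_star_map hM he hes hes (starJordan_one_sub_self he hes)
  have hS₀ := hΦ.isPeirce_sub_star_map hM he hes hx₀s
    (starJordan_one_sub_of_nsmul_eq hM he hes hx₀)
  rw [hS.1, hS.2, hS₀.1, hS₀.2, one_smul, one_smul, ← two_nsmul, ← two_nsmul, smul_comm] at h
  exact nsmul_right_injective two_ne_zero h.symm

theorem isSelfAdjoint_map (hΦ : IsScaledStarJordanDerivation Φ M c) (hM : M ≠ 0)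
    (he : IsIdempotentElem e) (hes : IsSelfAdjoint e)
    (hfaith : ∀ x : A, (∀ r : A, x * r * (1 - e) = 0) → x = 0) (hx₀s : IsSelfAdjoint x₀)
    (hx₀ : M • x₀ = e) : IsSelfAdjoint (Φ e) := by
  set Z := starJordan c x₀ + M • Φ x₀
  have hZ : Z - star Z = Φ e - star (Φ e) := by
    rw [← hΦ.nsmul_sub_star_map_of_nsmul_eq hM he hes hx₀s hx₀]
    simp only [Z, star_add, star_nsmul, (hx₀s.starJordan_left c).star_eq, smul_sub]
    abel
  have hZ₂₂ : peirce22 e Z = 0 := by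
    rw [map_add, map_nsmul, peirce22_starJordan_of_nsmul_eq hM he hx₀,
      hΦ.peirce22_map_of_nsmul_eq hM he hes hx₀, smul_zero, add_zero]
  have hZ₁₁ : peirce11 e Z = 0 := hfaith _ fun r => by
    have h := peirce12_starJordan he hes (isPeirce_peirce12 he r) Z
    rw [hZ₂₂, star_zero, mul_zero, add_zero, hΦ.peirce12_starJordan_eq_zero he hes hx₀
      (isPeirce_peirce12 he r)] at h
    rw [(isPeirce_peirce11 he Z).mul_mul_one_sub he, ← h]
  have hS := hΦ.isPeirce_sub_star_map hM he hes hes (starJordan_one_sub_self he hes)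
  have h : Φ e - star (Φ e) = 0 := by
    rw [← one_smul ℤ (Φ e - star (Φ e)), ← mul_one (1 : ℤ), ← hS.peirce11_eq, ← hZ, map_sub,
      ← peirce11_star hes, hZ₁₁, star_zero, sub_zero]
  exact (sub_eq_zero.mp h).symm

end IsScaledStarJordanDerivation

end SelfAdjointness

theorem stmt_11_general {A : Type*} [NonAssocRing A] [Module ℂ A]
    [SMulCommClass ℂ A A] [IsScalarTower ℂ A A] [StarRing A]
    (halt₁ : ∀ a b : A, a * a * b = a * (a * b))
    (halt₂ : ∀ a b : A, b * a * a = b * (a * a))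
    (e : A) (heStar : star e = e) (heIdem : e * e = e)
    (hsp : ∀ x : A, (∀ r : A, x * r * e = 0) → x = 0)
    (hcl : ∀ x : A, (∀ r : A, x * r * (1 - e) = 0) → x = 0)
    (n : ℕ) (hn : 2 ≤ n) (Φ : A → A)
    (hΦ : ∀ x y : A,
      Φ (leftStarJordan (List.ofFn (lastTwoFamily n x y))) =
        ∑ k : Fin n, leftStarJordan (List.ofFn
          (Function.update (lastTwoFamily n x y) k (Φ (lastTwoFamily n x y k))))) :
    star (Φ e) = Φ e ∧ star (Φ (1 - e)) = Φ (1 - e) := by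
  obtain ⟨p, rfl⟩ : ∃ p, n = p + 2 := ⟨n - 2, by omega⟩
  have : IsAlternative A := ⟨halt₁, halt₂⟩
  have := IsAddTorsionFree.of_isTorsionFree ℂ A
  have hM : 2 ^ p ≠ 0 := pow_ne_zero p two_ne_zero
  have key : ∀ u : A, IsIdempotentElem u → IsSelfAdjoint u →
      (∀ x : A, (∀ r : A, x * r * (1 - u) = 0) → x = 0) → IsSelfAdjoint (Φ u) :=
    fun u hu hus hfaith =>
      (isScaledStarJordanDerivation_of_lastTwo hΦ).isSelfAdjoint_map hM hu hus hfaith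
        (x₀ := ((2 ^ p : ℕ) : ℂ)⁻¹ • u)
        (by rw [IsSelfAdjoint, star_inv_natCast_smul, hus.star_eq])
        (by rw [← Nat.cast_smul_eq_nsmul ℂ, smul_smul, mul_inv_cancel₀ (by exact_mod_cast hM),
          one_smul])
  refine ⟨key e heIdem heStar hcl,
    key (1 - e) (IsIdempotentElem.one_sub heIdem) ((IsSelfAdjoint.one A).sub heStar) ?_⟩
  simpa only [sub_sub_cancel] using hsp

theorem stmt_11 {A : Type*} [NonAssocRing A] [Module ℂ A]
    [SMulCommClass ℂ A A] [IsScalarTower ℂ A A] [StarRing A]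
    (halt₁ : ∀ a b : A, a * a * b = a * (a * b))
    (halt₂ : ∀ a b : A, b * a * a = b * (a * a))
    (e : A) (heStar : star e = e) (heIdem : e * e = e) (he0 : e ≠ 0) (he1 : e ≠ 1)
    (hsp : ∀ x : A, (∀ r : A, x * r * e = 0) → x = 0)
    (hcl : ∀ x : A, (∀ r : A, x * r * (1 - e) = 0) → x = 0)
    (n : ℕ) (hn : 2 ≤ n) (Φ : A → A)
    (hΦ : ∀ x y : A,
      Φ (leftStarJordan (List.ofFn (lastTwoFamily n x y))) =
        ∑ k : Fin n, leftStarJordan (List.ofFn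
          (Function.update (lastTwoFamily n x y) k (Φ (lastTwoFamily n x y k))))) :
    star (Φ e) = Φ e ∧ star (Φ (1 - e)) = Φ (1 - e) :=
  stmt_11_general halt₁ halt₂ e heStar heIdem hsp hcl n hn Φ hΦ
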